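/- arXiv:2205.05178 — 2 statements merged into one kernel-verified Lean document; each statement's English description precedes it below -/
import Mathlib

section
/- Let F be a finite polyforest (a directed acyclic graph whose underlying undirected graph is a forest) with vertex set V and edge set E, equipped with the Lawvere (shortest directed path) metric d, where d(u,v) = ∞ if there is no directed path from u to v. Then for every t > 0, the similarity matrix Z := exp[-t·d] has a weighting, and the magnitude of F equals |V| - |E|·e^{-t}. -/
open scoped Classical

/-- The Lawvere (shortest directed path) distance in a digraph with edge relation `R`:
the least length of a directed walk from `u` to `v`, and `∞` if there is none. -/
noncomputable def lawvereDist {V : Type*} (R : V → V → Prop) (u v : V) : ℕ∞ :=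
  sInf {n : ℕ∞ | ∃ m : ℕ, n = (m : ℕ∞) ∧ ∃ f : Fin (m + 1) → V,
    f 0 = u ∧ f (Fin.last m) = v ∧ ∀ i : Fin m, R (f i.castSucc) (f i.succ)}

/-- The similarity `e^{-t·d}`, with `e^{-t·∞} := 0`. -/
noncomputable def sim (t : ℝ) (d : ℕ∞) : ℝ :=
  if d = ⊤ then 0 else Real.exp (-t * d.toNat)

/-! The weighting is `w v = 1 - e^{-t} · outdeg v`. Because the underlying graph is a forest, no
in-neighbour of `u` is reachable from `u`, and every other vertex `x` reachable from `u` has exactly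
one in-neighbour reachable from `u`, lying one step closer to `u`. Hence `∑_{v → x} e^{-t} Z(u,v)`
is `Z(u,x)` for `x ≠ u` and `0` for `x = u`, so `(Zw)(u) = ∑_x Z(u,x) - ∑_{x ≠ u} Z(u,x) = 1`. -/

open Finset Relation SimpleGraph

section LawvereDist

variable {V : Type*} {R : V → V → Prop} {u v x : V}

lemma lawvereDist_le_of_chain {m : ℕ} (f : Fin (m + 1) → V) (h₀ : f 0 = u)
    (hm : f (Fin.last m) = v) (hf : ∀ i : Fin m, R (f i.castSucc) (f i.succ)) :
    lawvereDist R u v ≤ m :=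
  sInf_le ⟨m, rfl, f, h₀, hm, hf⟩

lemma exists_chain_of_lawvereDist_ne_top (h : lawvereDist R u v ≠ ⊤) :
    ∃ m : ℕ, lawvereDist R u v = m ∧ ∃ f : Fin (m + 1) → V,
      f 0 = u ∧ f (Fin.last m) = v ∧ ∀ i : Fin m, R (f i.castSucc) (f i.succ) := by
  refine csInf_mem (α := ℕ∞) (s := {n | ∃ m : ℕ, n = m ∧ ∃ f : Fin (m + 1) → V,
    f 0 = u ∧ f (Fin.last m) = v ∧ ∀ i : Fin m, R (f i.castSucc) (f i.succ)}) ?_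
  refine Set.nonempty_iff_ne_empty.2 fun he => h ?_
  rw [lawvereDist, he, sInf_empty]

lemma exists_chain_of_lawvereDist_eq {m : ℕ} (h : lawvereDist R u v = m) :
    ∃ f : Fin (m + 1) → V,
      f 0 = u ∧ f (Fin.last m) = v ∧ ∀ i : Fin m, R (f i.castSucc) (f i.succ) := by
  obtain ⟨n, hn, hf⟩ := exists_chain_of_lawvereDist_ne_top (h ▸ ENat.natCast_ne_top m)
  obtain rfl : n = m := by exact_mod_cast hn.symm.trans h
  exact hf

@[simp]
lemma lawvereDist_self (u : V) : lawvereDist R u u = 0 :=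
  nonpos_iff_eq_zero.1 (lawvereDist_le_of_chain (fun _ => u) rfl rfl Fin.elim0)

lemma eq_of_lawvereDist_eq_zero (h : lawvereDist R u v = 0) : u = v := by
  obtain ⟨f, h₀, h₁, -⟩ := exists_chain_of_lawvereDist_eq (m := 0) h
  exact h₀.symm.trans h₁

lemma lawvereDist_le_add_one (u : V) (h : R v x) : lawvereDist R u x ≤ lawvereDist R u v + 1 := by
  by_cases hv : lawvereDist R u v = ⊤
  · simp [hv]
  obtain ⟨m, hm, f, h₀, h₁, hf⟩ := exists_chain_of_lawvereDist_ne_top hv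
  have hsnoc : ∀ i : Fin (m + 1), R ((Fin.snoc f x : Fin (m + 2) → V) i.castSucc)
      ((Fin.snoc f x : Fin (m + 2) → V) i.succ) := by
    refine Fin.lastCases ?_ (fun i => ?_)
    · simpa [h₁] using h
    · rw [Fin.succ_castSucc, Fin.snoc_castSucc, Fin.snoc_castSucc]
      exact hf i
  rw [hm]
  exact_mod_cast lawvereDist_le_of_chain _ (by simpa using h₀) (by simp) hsnoc

lemma exists_rel_lawvereDist_eq_of_eq_add_one {n : ℕ} (h : lawvereDist R u x = n + 1) :
    ∃ v, R v x ∧ lawvereDist R u v = n := by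
  obtain ⟨f, h₀, h₁, hf⟩ := exists_chain_of_lawvereDist_eq (m := n + 1) (by exact_mod_cast h)
  have hlast := hf (Fin.last n)
  rw [Fin.succ_last, h₁] at hlast
  refine ⟨_, hlast, le_antisymm ?_ ?_⟩
  · exact lawvereDist_le_of_chain (Fin.init f) h₀ rfl fun i => hf i.castSucc
  · have := h ▸ lawvereDist_le_add_one u hlast
    exact (ENat.add_le_add_iff_right ENat.one_ne_top).1 this

lemma reflTransGen_of_lawvereDist_ne_top (h : lawvereDist R u v ≠ ⊤) : ReflTransGen R u v := by
  obtain ⟨m, -, f, rfl, rfl, hf⟩ := exists_chain_of_lawvereDist_ne_top h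
  exact Fin.induction (motive := fun k => ReflTransGen R (f 0) (f k)) .refl
    (fun i ih => ih.tail (hf i)) (Fin.last m)

end LawvereDist

structure IsPolyforest {V : Type*} (R : V → V → Prop) : Prop where
  irrefl : ∀ v, ¬ R v v
  asymm : ∀ u v, R u v → ¬ R v u
  isAcyclic : (fromRel R).IsAcyclic

namespace IsPolyforest

variable {V : Type*} {R : V → V → Prop} {u v v' x : V}

lemma adj_of_rel (hR : IsPolyforest R) (h : R u v) : (fromRel R).Adj u v :=
  (fromRel_adj _ _ _).2 ⟨fun he => hR.irrefl _ (he ▸ h), .inl h⟩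

lemma exists_isPath_of_reflTransGen (hR : IsPolyforest R) (h : ReflTransGen R u v) :
    ∃ p : (fromRel R).Walk u v, p.IsPath ∧ ∀ d ∈ p.darts, R d.fst d.snd := by
  suffices ∃ p : (fromRel R).Walk u v, ∀ d ∈ p.darts, R d.fst d.snd by
    obtain ⟨p, hp⟩ := this
    exact ⟨p.bypass, p.bypass_isPath, fun d hd => hp d (p.darts_bypass_subset_darts hd)⟩
  induction h with
  | refl => exact ⟨.nil, by simp⟩
  | tail _ hbc ih =>
    obtain ⟨p, hp⟩ := ih
    refine ⟨p.concat (hR.adj_of_rel hbc), fun d hd => ?_⟩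
    rw [Walk.darts_concat, List.concat_eq_append, List.mem_append, List.mem_singleton] at hd
    rcases hd with hd | rfl
    exacts [hp d hd, hbc]

lemma not_rel_of_walk (hR : IsPolyforest R) (p : (fromRel R).Walk u v)
    (hp : ∀ d ∈ p.darts, R d.fst d.snd) : ¬ R v u := by
  intro hvu
  -- by uniqueness of paths, the directed path from `u` to `v` is the edge `u → v`
  have hadj := (hR.adj_of_rel hvu).symm
  have := hR.isAcyclic.subsingleton_path u v
  have hq : p.bypass = hadj.toWalk :=
    congrArg Subtype.val (Subsingleton.elim ⟨p.bypass, p.bypass_isPath⟩ ⟨_, hadj.isPath_toWalk⟩)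
  have huv : R u v := hp ⟨(u, v), hadj⟩ (p.darts_bypass_subset_darts (by simp [hq]))
  exact hR.asymm _ _ huv hvu

lemma lawvereDist_eq_top_of_rel (hR : IsPolyforest R) (h : R v u) : lawvereDist R u v = ⊤ := by
  by_contra hne
  obtain ⟨p, -, hp⟩ := hR.exists_isPath_of_reflTransGen (reflTransGen_of_lawvereDist_ne_top hne)
  exact hR.not_rel_of_walk p hp h

lemma eq_of_rel_of_reflTransGen (hR : IsPolyforest R) (hv : R v x) (hv' : R v' x)
    (h : ReflTransGen R u v) (h' : ReflTransGen R u v') : v = v' := by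
  have hpath : ∀ {w}, R w x → ReflTransGen R u w → ∃ (hadj : (fromRel R).Adj w x)
      (p : (fromRel R).Walk u w), (p.concat hadj).IsPath := by
    intro w hw huw
    obtain ⟨p, hp, hpR⟩ := hR.exists_isPath_of_reflTransGen huw
    have hx : x ∉ p.support := fun hx => hR.not_rel_of_walk (p.dropUntil x hx)
      (fun d hd => hpR d (p.darts_dropUntil_subset_darts hx hd)) hw
    exact ⟨hR.adj_of_rel hw, p, hp.concat hx _⟩
  obtain ⟨_, _, hp⟩ := hpath hv h
  obtain ⟨_, _, hp'⟩ := hpath hv' h'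
  have := hR.isAcyclic.subsingleton_path u x
  exact (Walk.concat_inj (congrArg Subtype.val (Subsingleton.elim ⟨_, hp⟩ ⟨_, hp'⟩))).1

lemma sum_rel_lawvereDist_add_one [Fintype V] {M : Type*} [AddCommMonoid M] (hR : IsPolyforest R)
    (φ : ℕ∞ → M) (hφ : φ ⊤ = 0) (u x : V) :
    ∑ v with R v x, φ (lawvereDist R u v + 1) = if x = u then 0 else φ (lawvereDist R u x) := by
  split_ifs with hxu
  · subst hxu
    refine sum_eq_zero fun v hv => ?_
    rw [hR.lawvereDist_eq_top_of_rel (mem_filter.1 hv).2, top_add, hφ]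
  by_cases hx : lawvereDist R u x = ⊤
  · rw [hx, hφ]
    refine sum_eq_zero fun v hv => ?_
    have := hx ▸ lawvereDist_le_add_one u (mem_filter.1 hv).2
    rw [top_le_iff.1 this, hφ]
  obtain ⟨n, hn⟩ := ENat.ne_top_iff_exists.1 hx
  obtain ⟨k, rfl⟩ := Nat.exists_eq_succ_of_ne_zero (n := n) fun h0 =>
    hxu (eq_of_lawvereDist_eq_zero (by rw [← hn, h0, Nat.cast_zero])).symm
  obtain ⟨v₀, hv₀, hk⟩ := exists_rel_lawvereDist_eq_of_eq_add_one (by rw [← hn]; push_cast; rfl)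
  rw [sum_eq_single_of_mem v₀ (mem_filter.2 ⟨mem_univ _, hv₀⟩), hk, ← hn]
  · push_cast; rfl
  · intro v hv hne
    by_contra hφv
    refine hne (hR.eq_of_rel_of_reflTransGen (u := u) (mem_filter.1 hv).2 hv₀ ?_ ?_) <;>
      refine reflTransGen_of_lawvereDist_ne_top fun htop => ?_
    · exact hφv (by rw [htop, top_add, hφ])
    · exact ENat.natCast_ne_top k (hk ▸ htop)

end IsPolyforest

section Magnitude

lemma sim_top (t : ℝ) : sim t ⊤ = 0 := if_pos rfl

lemma sim_zero (t : ℝ) : sim t 0 = 1 := by simp [sim]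

lemma sim_add_one (t : ℝ) (d : ℕ∞) : sim t (d + 1) = Real.exp (-t) * sim t d := by
  induction d using ENat.recTopCoe with
  | top => simp [sim_top]
  | coe n =>
    rw [← Nat.cast_one, ← Nat.cast_add, sim, sim, if_neg (ENat.natCast_ne_top _),
      if_neg (ENat.natCast_ne_top n), ENat.toNat_natCast, ENat.toNat_natCast, ← Real.exp_add]
    push_cast
    ring_nf

variable {V : Type*} [Fintype V] {R : V → V → Prop}

noncomputable def polyforestWeighting (R : V → V → Prop) (t : ℝ) (v : V) : ℝ :=
  1 - Real.exp (-t) * #{x | R v x}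

lemma IsPolyforest.sum_sim_mul_polyforestWeighting (hR : IsPolyforest R) (t : ℝ) (u : V) :
    ∑ v, sim t (lawvereDist R u v) * polyforestWeighting R t v = 1 := by
  calc ∑ v, sim t (lawvereDist R u v) * polyforestWeighting R t v
      = ∑ v, sim t (lawvereDist R u v) - ∑ v, ∑ x with R v x, sim t (lawvereDist R u v + 1) := by
        simp only [polyforestWeighting, sim_add_one, sum_const, nsmul_eq_mul, ← sum_sub_distrib]
        exact sum_congr rfl fun v _ => by ring
    _ = ∑ v, sim t (lawvereDist R u v) - ∑ x, ∑ v with R v x, sim t (lawvereDist R u v + 1) := by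
        simp only [sum_filter]
        rw [sum_comm]
    _ = ∑ v, sim t (lawvereDist R u v) -
          ∑ x, if x = u then 0 else sim t (lawvereDist R u x) := by
        simp only [hR.sum_rel_lawvereDist_add_one _ (sim_top t)]
    _ = 1 := by
        rw [sum_ite, sum_const_zero, zero_add, filter_ne', sum_erase_eq_sub (mem_univ u),
          lawvereDist_self, sim_zero, sub_sub_cancel]

lemma sum_polyforestWeighting (t : ℝ) :
    ∑ v, polyforestWeighting R t v = Fintype.card V - #{p : V × V | R p.1 p.2} * Real.exp (-t) := by
  simp only [polyforestWeighting, sum_sub_distrib, ← mul_sum, card_filter, Fintype.sum_prod_type]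
  push_cast
  simp [mul_comm]

end Magnitude

theorem polyforest_magnitude_general {V : Type*} [Fintype V]
    (R : V → V → Prop)
    (hirr : ∀ v, ¬ R v v) (hasymm : ∀ u v, R u v → ¬ R v u)
    (hforest : (SimpleGraph.fromRel R).IsAcyclic)
    (t : ℝ) :
    ∃ w : V → ℝ,
      (∀ u, ∑ v, sim t (lawvereDist R u v) * w v = 1) ∧
      ∑ v, w v = (Fintype.card V : ℝ) -
        ((Finset.univ.filter fun p : V × V => R p.1 p.2).card : ℝ) * Real.exp (-t) :=
  ⟨polyforestWeighting R t, (IsPolyforest.mk hirr hasymm hforest).sum_sim_mul_polyforestWeighting t,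
    sum_polyforestWeighting t⟩

/-- A finite polyforest (an acyclic digraph whose underlying undirected graph is a forest),
with the Lawvere directed-path metric, admits a weighting at every `t > 0`, and its magnitude
equals `|V| - |E| e^{-t}`. -/
theorem polyforest_magnitude {V : Type*} [Fintype V] [DecidableEq V]
    (R : V → V → Prop)
    (hirr : ∀ v, ¬ R v v) (hasymm : ∀ u v, R u v → ¬ R v u)
    (hforest : (SimpleGraph.fromRel R).IsAcyclic)
    (t : ℝ) (ht : 0 < t) :
    ∃ w : V → ℝ,
      (∀ u, ∑ v, sim t (lawvereDist R u v) * w v = 1) ∧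
      ∑ v, w v = (Fintype.card V : ℝ) -
        ((Finset.univ.filter fun p : V × V => R p.1 p.2).card : ℝ) * Real.exp (-t) :=
  polyforest_magnitude_general R hirr hasymm hforest t
end

section
/- For a strong finite loopless digraph D with basepoint v₀ and any t ∈ (0, ∞], lim_{L→∞} L^{-1} log Mag(B_{v₀}(L), t) ≤ h(D), where h(D) := lim_{L→∞} L^{-1} log |V(B_{v₀}(L))| is the topological entropy, with equality when t = ∞; moreover the limit on the left is independent of the basepoint v₀. -/
/-!
Walks of length `ℓ` from `v` are counted by the row sums of `A ^ ℓ`. Prefixing a fixed walk of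
length `d` from `u` to `w` embeds the walks from `w` into those from `u`, so
`N w L ≤ N u (L + d)`; by strong connectivity the counts from any two basepoints are therefore
sandwiched between shifts of each other, and a bounded shift does not change the exponential
growth rate. The magnitude `N - (N - 1) e^{-t}` lies between `(1 - e^{-t}) N` and `N`, so it has
the same growth rate as `N`.
-/

open Filter Topology

section GrowthRate

lemma Filter.Tendsto.comp_div_of_ratio_tendsto_one {g : ℕ → ℝ} {c : ℝ}
    (h : Tendsto (fun L : ℕ => g L / L) atTop (𝓝 c)) {φ : ℕ → ℕ} (hφ : Tendsto φ atTop atTop)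
    (hφ1 : Tendsto (fun L : ℕ => (φ L : ℝ) / L) atTop (𝓝 1)) :
    Tendsto (fun L : ℕ => g (φ L) / L) atTop (𝓝 c) := by
  have := (h.comp hφ).mul hφ1
  rw [mul_one] at this
  refine this.congr' ?_
  filter_upwards [hφ.eventually_ge_atTop 1] with L hL
  exact div_mul_div_cancel₀ (Nat.cast_ne_zero.2 (by omega))

lemma Filter.Tendsto.comp_add_div {g : ℕ → ℝ} {c : ℝ}
    (h : Tendsto (fun L : ℕ => g L / L) atTop (𝓝 c)) (d : ℕ) :
    Tendsto (fun L : ℕ => g (L + d) / L) atTop (𝓝 c) := by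
  refine h.comp_div_of_ratio_tendsto_one (tendsto_add_atTop_nat d) ?_
  have := (tendsto_const_nhds (x := (1 : ℝ))).add (tendsto_const_div_atTop_nhds_zero_nat (d : ℝ))
  rw [add_zero] at this
  refine this.congr' ?_
  filter_upwards [eventually_ge_atTop 1] with L hL
  have : (L : ℝ) ≠ 0 := Nat.cast_ne_zero.2 (by omega)
  push_cast
  field_simp

lemma Filter.Tendsto.comp_sub_div {g : ℕ → ℝ} {c : ℝ}
    (h : Tendsto (fun L : ℕ => g L / L) atTop (𝓝 c)) (d : ℕ) :
    Tendsto (fun L : ℕ => g (L - d) / L) atTop (𝓝 c) := by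
  refine h.comp_div_of_ratio_tendsto_one (tendsto_sub_atTop_nat d) ?_
  have := (tendsto_const_nhds (x := (1 : ℝ))).sub (tendsto_const_div_atTop_nhds_zero_nat (d : ℝ))
  rw [sub_zero] at this
  refine this.congr' ?_
  filter_upwards [eventually_ge_atTop (d + 1)] with L hL
  have : (L : ℝ) ≠ 0 := Nat.cast_ne_zero.2 (by omega)
  rw [Nat.cast_sub (by omega)]
  field_simp

lemma tendsto_log_div_of_const_mul_le {f g : ℕ → ℝ} {c h : ℝ} (hc : 0 < c)
    (hf : ∀ L, 0 < f L) (hlow : ∀ L, c * f L ≤ g L) (hup : ∀ L, g L ≤ f L)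
    (hlim : Tendsto (fun L : ℕ => Real.log (f L) / L) atTop (𝓝 h)) :
    Tendsto (fun L : ℕ => Real.log (g L) / L) atTop (𝓝 h) := by
  have hshifted : Tendsto (fun L : ℕ => Real.log c / L + Real.log (f L) / L) atTop (𝓝 h) := by
    simpa using (tendsto_const_div_atTop_nhds_zero_nat (Real.log c)).add hlim
  refine tendsto_of_tendsto_of_tendsto_of_le_of_le hshifted hlim (fun L => ?_) (fun L => ?_)
  · rw [← add_div, ← Real.log_mul hc.ne' (hf L).ne']
    gcongr
    · exact mul_pos hc (hf L)
    · exact hlow L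
  · have := mul_pos hc (hf L)
    gcongr
    · linarith [hlow L]
    · exact hup L

lemma tendsto_log_magnitude_div {N : ℕ → ℝ} {h t : ℝ} (hN : ∀ L, 1 ≤ N L) (ht : 0 < t)
    (hlim : Tendsto (fun L : ℕ => Real.log (N L) / L) atTop (𝓝 h)) :
    Tendsto (fun L : ℕ => Real.log (N L - (N L - 1) * Real.exp (-t)) / L) atTop (𝓝 h) := by
  have he0 : 0 < Real.exp (-t) := Real.exp_pos _
  have he1 : Real.exp (-t) < 1 := Real.exp_lt_one_iff.2 (neg_neg_of_pos ht)
  refine tendsto_log_div_of_const_mul_le (sub_pos.2 he1) (fun L => by linarith [hN L])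
    (fun L => ?_) (fun L => ?_) hlim
  · nlinarith [hN L]
  · nlinarith [hN L]

end GrowthRate

namespace Matrix

variable {V : Type*} [Fintype V] [DecidableEq V] {A : Matrix V V ℝ}

lemma pow_apply_mul_pow_apply_le_pow_add_apply (hA : ∀ u v, 0 ≤ A u v) (m n : ℕ) (u w k : V) :
    (A ^ m) u w * (A ^ n) w k ≤ (A ^ (m + n)) u k := by
  rw [pow_add, mul_apply]
  exact Finset.single_le_sum
    (fun j _ => mul_nonneg (pow_apply_nonneg hA m u j) (pow_apply_nonneg hA n j k))
    (Finset.mem_univ w)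

lemma exists_one_le_pow_apply_of_reflTransGen {R : V → V → Prop} (hA : ∀ u v, 0 ≤ A u v)
    (hR : ∀ u v, R u v → 1 ≤ A u v) {u v : V} (huv : Relation.ReflTransGen R u v) :
    ∃ d : ℕ, 1 ≤ (A ^ d) u v := by
  induction huv with
  | refl => exact ⟨0, by simp⟩
  | @tail b c _ hbc ih =>
    obtain ⟨d, hd⟩ := ih
    refine ⟨d + 1, le_trans ?_ (pow_apply_mul_pow_apply_le_pow_add_apply hA d 1 u b c)⟩
    rw [pow_one]
    nlinarith [hR b c hbc]

def ballSize (A : Matrix V V ℝ) (v : V) (L : ℕ) : ℝ :=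
  ∑ ℓ ∈ Finset.range (L + 1), ∑ k, (A ^ ℓ) v k

lemma one_le_ballSize (hA : ∀ u v, 0 ≤ A u v) (v : V) (L : ℕ) : 1 ≤ ballSize A v L :=
  calc (1 : ℝ) = ∑ k, (A ^ 0) v k := by simp [one_apply]
    _ ≤ ballSize A v L :=
      Finset.single_le_sum (fun ℓ _ => Finset.sum_nonneg fun k _ => pow_apply_nonneg hA ℓ v k)
        (Finset.mem_range.2 L.succ_pos)

lemma ballSize_le_ballSize_add (hA : ∀ u v, 0 ≤ A u v) {u w : V} {d : ℕ}
    (hd : 1 ≤ (A ^ d) u w) (L : ℕ) : ballSize A w L ≤ ballSize A u (L + d) := by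
  have hprefix : ∀ ℓ k, (A ^ ℓ) w k ≤ (A ^ (d + ℓ)) u k := fun ℓ k =>
    (le_mul_of_one_le_left (pow_apply_nonneg hA ℓ w k) hd).trans
      (pow_apply_mul_pow_apply_le_pow_add_apply hA d ℓ u w k)
  calc ballSize A w L ≤ ∑ ℓ ∈ Finset.range (L + 1), ∑ k, (A ^ (d + ℓ)) u k :=
        Finset.sum_le_sum fun ℓ _ => Finset.sum_le_sum fun k _ => hprefix ℓ k
    _ = ∑ ℓ ∈ Finset.Ico d (d + (L + 1)), ∑ k, (A ^ ℓ) u k := by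
        rw [Finset.sum_Ico_eq_sum_range, Nat.add_sub_cancel_left]
    _ ≤ ballSize A u (L + d) := by
        refine Finset.sum_le_sum_of_subset_of_nonneg (fun ℓ hℓ => ?_)
          fun ℓ _ _ => Finset.sum_nonneg fun k _ => pow_apply_nonneg hA ℓ u k
        rw [Finset.mem_Ico] at hℓ
        rw [Finset.mem_range]
        omega

lemma tendsto_log_ballSize_div (hA : ∀ u v, 0 ≤ A u v) (hreach : ∀ u w, ∃ d, 1 ≤ (A ^ d) u w)
    {v₀ : V} {h : ℝ} (hlim : Tendsto (fun L : ℕ => Real.log (ballSize A v₀ L) / L) atTop (𝓝 h))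
    (v : V) : Tendsto (fun L : ℕ => Real.log (ballSize A v L) / L) atTop (𝓝 h) := by
  obtain ⟨d, hd⟩ := hreach v v₀
  obtain ⟨d', hd'⟩ := hreach v₀ v
  have hpos := fun w L => zero_lt_one.trans_le (one_le_ballSize hA w L)
  refine tendsto_of_tendsto_of_tendsto_of_le_of_le' (hlim.comp_sub_div d) (hlim.comp_add_div d')
    ?_ (Eventually.of_forall fun L => ?_)
  · filter_upwards [eventually_ge_atTop d] with L hL
    have := ballSize_le_ballSize_add hA hd (L - d)
    rw [Nat.sub_add_cancel hL] at this
    gcongr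
    exact hpos _ _
  · have := ballSize_le_ballSize_add hA hd' L
    gcongr
    exact hpos _ _

end Matrix

theorem ball_magnitude_growth_le_entropy_general {V : Type*} [Fintype V] [DecidableEq V]
    (R : V → V → Prop) [DecidableRel R]
    (hstrong : ∀ u v : V, Relation.ReflTransGen R u v)
    (A : Matrix V V ℝ) (hA : A = fun u v => if R u v then 1 else 0)
    (v₀ : V) (N : V → ℕ → ℝ)
    (hN : ∀ v L, N v L = ∑ ℓ ∈ Finset.range (L + 1), ∑ k, (A ^ ℓ) v k)
    (hD : ℝ)
    (hlim : Tendsto (fun L : ℕ => Real.log (N v₀ L) / L) atTop (nhds hD)) :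
    (∀ t : ℝ, 0 < t → ∃ c : ℝ, c ≤ hD ∧ ∀ v : V,
      Tendsto (fun L : ℕ => Real.log (N v L - (N v L - 1) * Real.exp (-t)) / L)
        atTop (nhds c)) ∧
    (∀ v : V, Tendsto (fun L : ℕ => Real.log (N v L) / L) atTop (nhds hD)) := by
  have hA0 : ∀ u v, 0 ≤ A u v := fun u v => by rw [hA]; dsimp only; split_ifs <;> norm_num
  have hR : ∀ u v, R u v → 1 ≤ A u v := fun u v huv => by rw [hA]; simp [huv]
  have hreach u w := Matrix.exists_one_le_pow_apply_of_reflTransGen hA0 hR (hstrong u w)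
  obtain rfl : N = Matrix.ballSize A := funext fun v => funext (hN v)
  have hball := Matrix.tendsto_log_ballSize_div hA0 hreach hlim
  exact ⟨fun t ht => ⟨hD, le_rfl, fun v =>
    tendsto_log_magnitude_div (Matrix.one_le_ballSize hA0 v) ht (hball v)⟩, hball⟩

/-- For a strong finite loopless digraph `D` with basepoint `v₀`, writing
`N v L = Σ_{ℓ=0}^{L} Σ_k (A^ℓ)_{v k}` for the vertex count of the ball `B_v(L)` in the universal
cover and `h(D)` for the limit of `L⁻¹ log N(v₀,L)` (the topological entropy), we have for any
`t ∈ (0,∞]` that `lim_L L⁻¹ log Mag(B_{v₀}(L),t) ≤ h(D)`, with equality at `t = ∞` (where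
`Mag(·,∞) = N`); moreover the limit is independent of the basepoint. -/
theorem ball_magnitude_growth_le_entropy {V : Type*} [Fintype V] [DecidableEq V]
    (R : V → V → Prop) [DecidableRel R]
    (hirr : ∀ v, ¬ R v v) (hstrong : ∀ u v : V, Relation.ReflTransGen R u v)
    (A : Matrix V V ℝ) (hA : A = fun u v => if R u v then 1 else 0)
    (v₀ : V) (N : V → ℕ → ℝ)
    (hN : ∀ v L, N v L = ∑ ℓ ∈ Finset.range (L + 1), ∑ k, (A ^ ℓ) v k)
    (hD : ℝ)
    (hlim : Tendsto (fun L : ℕ => Real.log (N v₀ L) / L) atTop (nhds hD)) :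
    (∀ t : ℝ, 0 < t → ∃ c : ℝ, c ≤ hD ∧ ∀ v : V,
      Tendsto (fun L : ℕ => Real.log (N v L - (N v L - 1) * Real.exp (-t)) / L)
        atTop (nhds c)) ∧
    (∀ v : V, Tendsto (fun L : ℕ => Real.log (N v L) / L) atTop (nhds hD)) :=
  ball_magnitude_growth_le_entropy_general R hstrong A hA v₀ N hN hD hlim
end
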